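/- arXiv:1601.03889 — 5 statements merged into one kernel-verified Lean document; each statement's English description precedes it below -/
import Mathlib

section
/- Let B, C⁻, C⁺ > 0 with C⁻ ≤ C⁺. Let v ∈ L²(ℝ) with ‖v‖_{L²} ≤ B and let ξ : ℝ → ℝ be measurable with C⁻ ≤ ξ(Y) ≤ C⁺ for a.e. Y. Define g(z) = min{1, e^{(C⁻/2)(B²/2 − |z|)}}. Then ‖g‖_{L¹(ℝ)} = B² + 4/C⁻, and for every q ≥ 1 and every f ∈ L^q(ℝ): ‖Y ↦ ∫_ℝ exp(−|∫_Y^{Y'} cos²(v(s)/2) ξ(s) ds|) f(Y') dY'‖_{L^q} ≤ ‖g‖_{L¹} · ‖f‖_{L^q}. -/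
open MeasureTheory Real Set
open scoped ENNReal

/-!
Since `cos² (x / 2) ≥ 1 - x² / 4` and `ξ ≥ C⁻`, for `Y ≤ Y'` the exponent satisfies
`∫_Y^{Y'} cos² (v / 2) ξ ≥ C⁻ ((Y' - Y) - ‖v‖₂² / 4)`, so the kernel is dominated by `g (Y - Y')`.
The operator is then bounded by convolution with `g`, and Young's inequality
`‖g ⋆ F‖_q ≤ ‖g‖₁ ‖F‖_q` follows from Hölder's inequality in the form
`(∫ K F)^q ≤ (∫ K)^(q-1) ∫ K F^q` (with `K = g (Y - ·)`) and Tonelli.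
-/

theorem rpow_lintegral_mul_le_lintegral_mul_rpow {α : Type*} [MeasurableSpace α]
    {μ : Measure α} {K F : α → ℝ≥0∞} (hK : AEMeasurable K μ) (hF : AEMeasurable F μ)
    {q : ℝ} (hq : 1 ≤ q) :
    (∫⁻ a, K a * F a ∂μ) ^ q ≤ (∫⁻ a, K a ∂μ) ^ (q - 1) * ∫⁻ a, K a * F a ^ q ∂μ := by
  have hq0 : 0 < q := by linarith
  have hexp : 0 ≤ 1 - 1 / q := by
    rw [sub_nonneg, div_le_one hq0]; exact hq
  have holder := ENNReal.lintegral_mul_norm_pow_le (g := fun a => K a * F a ^ q) hK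
    (hK.mul (hF.pow_const q)) hexp (by positivity) (sub_add_cancel 1 (1 / q))
  have hsplit : ∀ a, K a ^ (1 - 1 / q) * (K a * F a ^ q) ^ (1 / q) = K a * F a := fun a => by
    rw [ENNReal.mul_rpow_of_nonneg _ _ (by positivity), ← ENNReal.rpow_mul,
      mul_one_div_cancel hq0.ne', ENNReal.rpow_one, ← mul_assoc,
      ← ENNReal.rpow_add_of_nonneg _ _ hexp (by positivity), sub_add_cancel, ENNReal.rpow_one]
  simp only [hsplit] at holder
  calc (∫⁻ a, K a * F a ∂μ) ^ q
      ≤ ((∫⁻ a, K a ∂μ) ^ (1 - 1 / q) * (∫⁻ a, K a * F a ^ q ∂μ) ^ (1 / q)) ^ q :=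
        ENNReal.rpow_le_rpow holder hq0.le
    _ = (∫⁻ a, K a ∂μ) ^ (q - 1) * ∫⁻ a, K a * F a ^ q ∂μ := by
        rw [ENNReal.mul_rpow_of_nonneg _ _ hq0.le, ← ENNReal.rpow_mul, ← ENNReal.rpow_mul,
          one_div_mul_cancel hq0.ne', ENNReal.rpow_one, sub_mul, one_div_mul_cancel hq0.ne',
          one_mul]

section Young

variable {G : Type*} [MeasurableSpace G] [AddCommGroup G] [MeasurableAdd₂ G] [MeasurableNeg G]
  {μ : Measure G} [SFinite μ] [μ.IsAddLeftInvariant] [μ.IsNegInvariant]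

theorem lintegral_rpow_lintegral_mul_sub_le {K F : G → ℝ≥0∞} (hK : Measurable K)
    (hF : AEMeasurable F μ) {q : ℝ} (hq : 1 ≤ q) :
    ∫⁻ x, (∫⁻ y, K (x - y) * F y ∂μ) ^ q ∂μ ≤ (∫⁻ z, K z ∂μ) ^ q * ∫⁻ y, F y ^ q ∂μ := by
  set A := ∫⁻ z, K z ∂μ
  have hkernel : AEMeasurable (fun p : G × G => K (p.1 - p.2) * F p.2 ^ q) (μ.prod μ) :=
    (by fun_prop : AEMeasurable (fun p : G × G => K (p.1 - p.2)) (μ.prod μ)).mul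
      (hF.pow_const q).comp_snd
  have hpointwise : ∀ x, (∫⁻ y, K (x - y) * F y ∂μ) ^ q
      ≤ A ^ (q - 1) * ∫⁻ y, K (x - y) * F y ^ q ∂μ := fun x => by
    simpa only [A, lintegral_sub_left_eq_self] using
      rpow_lintegral_mul_le_lintegral_mul_rpow (K := fun y => K (x - y))
        (hK.comp (measurable_const_sub x)).aemeasurable hF hq
  calc ∫⁻ x, (∫⁻ y, K (x - y) * F y ∂μ) ^ q ∂μ
      ≤ ∫⁻ x, A ^ (q - 1) * ∫⁻ y, K (x - y) * F y ^ q ∂μ ∂μ := lintegral_mono hpointwise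
    _ = A ^ (q - 1) * ∫⁻ y, (∫⁻ x, K (x - y) ∂μ) * F y ^ q ∂μ := by
        rw [lintegral_const_mul'' _ hkernel.lintegral_prod_right',
          lintegral_lintegral_swap hkernel]
        congr 1
        exact lintegral_congr fun y =>
          lintegral_mul_const (F y ^ q) (hK.comp (measurable_id.sub_const y))
    _ = A ^ q * ∫⁻ y, F y ^ q ∂μ := by
        have hpow : A ^ (q - 1) * A = A ^ q := by
          conv_rhs => rw [← sub_add_cancel q 1,
            ENNReal.rpow_add_of_nonneg _ _ (by linarith) zero_le_one, ENNReal.rpow_one]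
        simp_rw [lintegral_sub_right_eq_self, lintegral_const_mul'' _ (hF.pow_const q), ← mul_assoc]
        rw [hpow]

theorem eLpNorm_integral_smul_le_of_norm_le_sub {E : Type*} [NormedAddCommGroup E]
    [NormedSpace ℝ E] {k : G → G → ℝ} {g : G → ℝ} (hg : Measurable g)
    (hk : ∀ x y, ‖k x y‖ ≤ g (x - y)) {f : G → E} (hf : AEStronglyMeasurable f μ)
    {p : ℝ≥0∞} (hp : 1 ≤ p) (hp_top : p ≠ ∞) :
    eLpNorm (fun x => ∫ y, k x y • f y ∂μ) p μ ≤ eLpNorm g 1 μ * eLpNorm f p μ := by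
  have hp0 : p ≠ 0 := (zero_lt_one.trans_le hp).ne'
  have hr : 1 ≤ p.toReal := by
    simpa using ENNReal.toReal_mono hp_top hp
  have hr0 : 0 < p.toReal := zero_lt_one.trans_le hr
  have hpointwise : ∀ x, ‖∫ y, k x y • f y ∂μ‖ₑ ≤ ∫⁻ y, ‖g (x - y)‖ₑ * ‖f y‖ₑ ∂μ :=
    fun x => (enorm_integral_le_lintegral_enorm _).trans <| lintegral_mono fun y => by
      rw [enorm_smul]
      gcongr
      exact enorm_le_iff_norm_le.mpr ((hk x y).trans (le_abs_self _))
  rw [eLpNorm_one_eq_lintegral_enorm, eLpNorm_eq_lintegral_rpow_enorm_toReal hp0 hp_top,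
    eLpNorm_eq_lintegral_rpow_enorm_toReal hp0 hp_top]
  calc (∫⁻ x, ‖∫ y, k x y • f y ∂μ‖ₑ ^ p.toReal ∂μ) ^ (1 / p.toReal)
      ≤ (∫⁻ x, (∫⁻ y, ‖g (x - y)‖ₑ * ‖f y‖ₑ ∂μ) ^ p.toReal ∂μ) ^ (1 / p.toReal) := by
        gcongr with x
        exact hpointwise x
    _ ≤ ((∫⁻ z, ‖g z‖ₑ ∂μ) ^ p.toReal * ∫⁻ y, ‖f y‖ₑ ^ p.toReal ∂μ) ^ (1 / p.toReal) := by
        gcongr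
        exact lintegral_rpow_lintegral_mul_sub_le hg.enorm hf.enorm hr
    _ = (∫⁻ z, ‖g z‖ₑ ∂μ) * (∫⁻ y, ‖f y‖ₑ ^ p.toReal ∂μ) ^ (1 / p.toReal) := by
        rw [ENNReal.mul_rpow_of_nonneg _ _ (by positivity), ← ENNReal.rpow_mul,
          mul_one_div_cancel hr0.ne', ENNReal.rpow_one]

end Young

theorem integrable_exp_neg_mul_abs {c : ℝ} (hc : 0 < c) :
    Integrable fun z : ℝ => exp (-(c * |z|)) := by
  rw [← integrableOn_univ, ← Iic_union_Ioi (a := 0)]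
  refine IntegrableOn.union ?_ ?_
  · refine (integrableOn_exp_mul_Iic hc 0).congr_fun (fun z hz => ?_) measurableSet_Iic
    rw [abs_of_nonpos hz, mul_neg, neg_neg]
  · refine (integrableOn_exp_mul_Ioi (neg_lt_zero.2 hc) 0).congr_fun (fun z hz => ?_)
      measurableSet_Ioi
    simp only [abs_of_pos (mem_Ioi.1 hz), neg_mul]

section CappedExp

variable {c R : ℝ}

theorem continuous_min_one_exp_mul_sub (c R : ℝ) :
    Continuous fun t : ℝ => min 1 (exp (c * (R - t))) := by
  fun_prop

theorem integrable_min_one_exp_mul_sub_abs (hc : 0 < c) :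
    Integrable fun z : ℝ => min 1 (exp (c * (R - |z|))) := by
  refine ((integrable_exp_neg_mul_abs hc).const_mul (exp (c * R))).mono'
    ((continuous_min_one_exp_mul_sub c R).comp continuous_abs).aestronglyMeasurable
    (Filter.Eventually.of_forall fun z => ?_)
  rw [norm_of_nonneg (le_min zero_le_one (exp_pos _).le), ← exp_add, mul_sub, sub_eq_add_neg]
  exact min_le_right _ _

theorem integral_min_one_exp_mul_sub_abs (hc : 0 < c) (hR : 0 ≤ R) :
    ∫ z : ℝ, min 1 (exp (c * (R - |z|))) = 2 * R + 2 / c := by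
  have hcont := continuous_min_one_exp_mul_sub c R
  have hnear : ∀ t ∈ Ioc 0 R, min 1 (exp (c * (R - t))) = 1 := fun t ht =>
    min_eq_left (one_le_exp (mul_nonneg hc.le (sub_nonneg.2 ht.2)))
  have hfar : ∀ t ∈ Ioi R, min 1 (exp (c * (R - t))) = exp (c * R) * exp (-c * t) := by
    intro t ht
    rw [← exp_add, show c * R + -c * t = c * (R - t) by ring]
    exact min_eq_right (exp_le_one_iff.2 (mul_nonpos_of_nonneg_of_nonpos hc.le
      (sub_nonpos.2 (le_of_lt ht))))
  have hint_near : IntegrableOn (fun t => min 1 (exp (c * (R - t)))) (Ioc 0 R) :=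
    (hcont.integrableOn_Icc).mono_set Ioc_subset_Icc_self
  have hint_far : IntegrableOn (fun t => min 1 (exp (c * (R - t)))) (Ioi R) := by
    refine IntegrableOn.congr_fun ?_ (fun t ht => (hfar t ht).symm) measurableSet_Ioi
    exact (integrableOn_exp_mul_Ioi (neg_lt_zero.2 hc) R).const_mul _
  rw [integral_comp_abs (f := fun t => min 1 (exp (c * (R - t)))), ← Ioc_union_Ioi_eq_Ioi hR,
    setIntegral_union (Ioc_disjoint_Ioi le_rfl) measurableSet_Ioi hint_near hint_far,
    setIntegral_congr_fun measurableSet_Ioc hnear, setIntegral_congr_fun measurableSet_Ioi hfar,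
    integral_const_mul, integral_exp_mul_Ioi (neg_lt_zero.2 hc), neg_div_neg_eq, mul_div_assoc',
    neg_mul, ← exp_add, add_neg_cancel, exp_zero, integral_const, measureReal_restrict_apply_univ,
    volume_real_Ioc_of_le hR, sub_zero, smul_eq_mul, mul_one]
  ring

theorem eLpNorm_one_min_one_exp_mul_sub_abs (hc : 0 < c) (hR : 0 ≤ R) :
    eLpNorm (fun z : ℝ => min 1 (exp (c * (R - |z|)))) 1 = ENNReal.ofReal (2 * R + 2 / c) := by
  rw [← integral_min_one_exp_mul_sub_abs hc hR, eLpNorm_one_eq_lintegral_enorm,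
    ofReal_integral_eq_lintegral_ofReal (integrable_min_one_exp_mul_sub_abs hc)
      (Filter.Eventually.of_forall fun z => le_min zero_le_one (exp_pos _).le)]
  congr 1 with z
  exact Real.enorm_of_nonneg (le_min zero_le_one (exp_pos _).le)

end CappedExp

theorem integral_sq_le_of_eLpNorm_two_le {α : Type*} [MeasurableSpace α] {μ : Measure α}
    {v : α → ℝ} (hv : MemLp v 2 μ) {B : ℝ} (hvB : eLpNorm v 2 μ ≤ ENNReal.ofReal B) :
    ∫ a, v a ^ 2 ∂μ ≤ B ^ 2 := by
  rw [hv.eLpNorm_eq_integral_rpow_norm two_ne_zero ENNReal.ofNat_ne_top,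
    ENNReal.ofReal_le_ofReal_iff'] at hvB
  simp only [ENNReal.toReal_ofNat, norm_eq_abs, rpow_two, sq_abs] at hvB
  have hI : 0 ≤ ∫ a, v a ^ 2 ∂μ := integral_nonneg fun a => sq_nonneg _
  have hsqrt : ((∫ a, v a ^ 2 ∂μ) ^ (2⁻¹ : ℝ)) ^ 2 = ∫ a, v a ^ 2 ∂μ := by
    rw [← rpow_natCast, ← rpow_mul hI]; norm_num
  have hroot : 0 ≤ (∫ a, v a ^ 2 ∂μ) ^ (2⁻¹ : ℝ) := rpow_nonneg hI _
  rw [← hsqrt]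
  rcases hvB with h | h <;> nlinarith

theorem one_sub_sq_div_four_le_cos_half_sq (x : ℝ) : 1 - x ^ 2 / 4 ≤ cos (x / 2) ^ 2 := by
  nlinarith [cos_sq_add_sin_sq (x / 2), sin_sq_le_sq (x := x / 2)]

section Kernel

variable {v ξ : ℝ → ℝ} {Cm Cp : ℝ}

theorem intervalIntegrable_cos_sq_mul (hv : AEStronglyMeasurable v)
    (hξm : AEStronglyMeasurable ξ) (hξ : ∀ᵐ s, ξ s ∈ Icc Cm Cp) (a b : ℝ) :
    IntervalIntegrable (fun s => cos (v s / 2) ^ 2 * ξ s) volume a b := by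
  refine (intervalIntegrable_const (c := max |Cm| |Cp|)).mono_fun
    ((((continuous_cos.comp (continuous_id.div_const 2)).pow 2).comp_aestronglyMeasurable hv).mul
      hξm).restrict ?_
  filter_upwards [ae_restrict_of_ae hξ] with s hs
  rw [norm_mul, norm_pow, Real.norm_eq_abs, Real.norm_eq_abs,
    norm_of_nonneg ((abs_nonneg Cm).trans (le_max_left _ _))]
  have hcos : |cos (v s / 2)| ^ 2 ≤ 1 := pow_le_one₀ (abs_nonneg _) (abs_cos_le_one _)
  exact (mul_le_of_le_one_left (abs_nonneg _) hcos).trans (abs_le_max_abs_abs hs.1 hs.2)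

theorem mul_sub_integral_sq_le_integral_cos_sq_mul (hv : MemLp v 2)
    (hξm : AEStronglyMeasurable ξ) (hξ : ∀ᵐ s, ξ s ∈ Icc Cm Cp) (hCm : 0 ≤ Cm) {a b : ℝ}
    (hab : a ≤ b) :
    Cm * ((b - a) - (∫ s in a..b, v s ^ 2) / 4) ≤ ∫ s in a..b, cos (v s / 2) ^ 2 * ξ s := by
  have hsq : IntervalIntegrable (fun s => v s ^ 2) volume a b :=
    hv.integrable_sq.intervalIntegrable
  calc Cm * ((b - a) - (∫ s in a..b, v s ^ 2) / 4) = ∫ s in a..b, Cm * (1 - v s ^ 2 / 4) := by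
        rw [intervalIntegral.integral_const_mul, intervalIntegral.integral_sub
          intervalIntegrable_const (hsq.div_const 4), intervalIntegral.integral_div]
        simp
    _ ≤ ∫ s in a..b, cos (v s / 2) ^ 2 * ξ s := by
        refine intervalIntegral.integral_mono_ae_restrict hab
          ((intervalIntegrable_const.sub (hsq.div_const 4)).const_mul Cm)
          (intervalIntegrable_cos_sq_mul hv.1 hξm hξ a b) ?_
        filter_upwards [ae_restrict_of_ae hξ] with s hs
        calc Cm * (1 - v s ^ 2 / 4) ≤ Cm * cos (v s / 2) ^ 2 :=
              mul_le_mul_of_nonneg_left (one_sub_sq_div_four_le_cos_half_sq _) hCm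
          _ ≤ cos (v s / 2) ^ 2 * ξ s := by
              rw [mul_comm]; exact mul_le_mul_of_nonneg_left hs.1 (sq_nonneg _)

theorem exp_neg_abs_integral_cos_sq_mul_le {B : ℝ} (hv : MemLp v 2)
    (hvB : ∫ s, v s ^ 2 ≤ B ^ 2) (hξm : AEStronglyMeasurable ξ) (hξ : ∀ᵐ s, ξ s ∈ Icc Cm Cp)
    (hCm : 0 ≤ Cm) (Y Y' : ℝ) :
    exp (-|∫ s in Y..Y', cos (v s / 2) ^ 2 * ξ s|)
      ≤ min 1 (exp ((Cm / 2) * (B ^ 2 / 2 - |Y - Y'|))) := by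
  wlog h : Y ≤ Y' generalizing Y Y'
  · simpa only [intervalIntegral.integral_symm Y Y', abs_neg, abs_sub_comm Y'] using
      this Y' Y (le_of_not_ge h)
  have hI_nonneg : 0 ≤ ∫ s in Y..Y', cos (v s / 2) ^ 2 * ξ s :=
    intervalIntegral.integral_nonneg_of_ae h <| hξ.mono fun s hs =>
      mul_nonneg (sq_nonneg _) (hCm.trans hs.1)
  have hsq_le : ∫ s in Y..Y', v s ^ 2 ≤ B ^ 2 := by
    refine le_trans ?_ hvB
    rw [intervalIntegral.integral_of_le h]
    exact setIntegral_le_integral hv.integrable_sq (Filter.Eventually.of_forall fun s =>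
      sq_nonneg _)
  have hlow := mul_sub_integral_sq_le_integral_cos_sq_mul hv hξm hξ hCm h
  rw [abs_of_nonneg hI_nonneg, abs_sub_comm, abs_of_nonneg (sub_nonneg.2 h)]
  refine le_min (exp_le_one_iff.2 (by linarith)) (exp_le_exp.2 ?_)
  nlinarith [mul_le_mul_of_nonneg_left hsq_le hCm, mul_nonneg hCm (sub_nonneg.2 h)]

end Kernel

theorem stmt_7_general (B Cm Cp : ℝ) (hCm : 0 < Cm)
    (v ξ : ℝ → ℝ)
    (hv : MemLp v 2 (volume : Measure ℝ))
    (hvB : eLpNorm v 2 (volume : Measure ℝ) ≤ ENNReal.ofReal B)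
    (hξm : Measurable ξ) (hξ : ∀ᵐ Y : ℝ, ξ Y ∈ Set.Icc Cm Cp) :
    eLpNorm (fun z : ℝ => min 1 (Real.exp ((Cm / 2) * (B ^ 2 / 2 - |z|)))) 1
        (volume : Measure ℝ) = ENNReal.ofReal (B ^ 2 + 4 / Cm) ∧
    ∀ q : ℝ, 1 ≤ q → ∀ f : ℝ → ℝ, MemLp f (ENNReal.ofReal q) (volume : Measure ℝ) →
      eLpNorm (fun Y : ℝ => ∫ Y' : ℝ,
          Real.exp (-|∫ s in Y..Y', Real.cos (v s / 2) ^ 2 * ξ s|) * f Y')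
          (ENNReal.ofReal q) (volume : Measure ℝ)
        ≤ ENNReal.ofReal (B ^ 2 + 4 / Cm)
            * eLpNorm f (ENNReal.ofReal q) (volume : Measure ℝ) := by
  have hg : eLpNorm (fun z : ℝ => min 1 (exp ((Cm / 2) * (B ^ 2 / 2 - |z|)))) 1
      = ENNReal.ofReal (B ^ 2 + 4 / Cm) := by
    rw [eLpNorm_one_min_one_exp_mul_sub_abs (half_pos hCm) (by positivity)]
    congr 1
    field_simp
    ring
  refine ⟨hg, fun q hq f hf => ?_⟩
  have hkernel (Y Y' : ℝ) : ‖exp (-|∫ s in Y..Y', cos (v s / 2) ^ 2 * ξ s|)‖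
      ≤ min 1 (exp ((Cm / 2) * (B ^ 2 / 2 - |Y - Y'|))) := by
    rw [norm_of_nonneg (exp_pos _).le]
    exact exp_neg_abs_integral_cos_sq_mul_le hv (integral_sq_le_of_eLpNorm_two_le hv hvB)
      hξm.aestronglyMeasurable hξ hCm.le Y Y'
  rw [← hg]
  simpa only [smul_eq_mul] using eLpNorm_integral_smul_le_of_norm_le_sub (by fun_prop) hkernel
    hf.1 (ENNReal.one_le_ofReal.2 hq) ENNReal.ofReal_ne_top

/-- The kernel estimate: if `‖v‖_{L²} ≤ B` and `C⁻ ≤ ξ ≤ C⁺` a.e., then with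
`g(z) = min{1, exp((C⁻/2)(B²/2 − |z|))}` one has `‖g‖_{L¹} = B² + 4/C⁻`, and for
every `q ≥ 1` and `f ∈ L^q` the operator with kernel
`exp(−|∫_Y^{Y'} cos²(v/2) ξ ds|)` maps `f` to a function with `L^q` norm at most
`‖g‖_{L¹} ‖f‖_{L^q}`. -/
theorem stmt_7 (B Cm Cp : ℝ) (hB : 0 < B) (hCm : 0 < Cm) (hCp : 0 < Cp) (hle : Cm ≤ Cp)
    (v ξ : ℝ → ℝ)
    (hv : MemLp v 2 (volume : Measure ℝ))
    (hvB : eLpNorm v 2 (volume : Measure ℝ) ≤ ENNReal.ofReal B)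
    (hξm : Measurable ξ) (hξ : ∀ᵐ Y : ℝ, ξ Y ∈ Set.Icc Cm Cp) :
    eLpNorm (fun z : ℝ => min 1 (Real.exp ((Cm / 2) * (B ^ 2 / 2 - |z|)))) 1
        (volume : Measure ℝ) = ENNReal.ofReal (B ^ 2 + 4 / Cm) ∧
    ∀ q : ℝ, 1 ≤ q → ∀ f : ℝ → ℝ, MemLp f (ENNReal.ofReal q) (volume : Measure ℝ) →
      eLpNorm (fun Y : ℝ => ∫ Y' : ℝ,
          Real.exp (-|∫ s in Y..Y', Real.cos (v s / 2) ^ 2 * ξ s|) * f Y')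
          (ENNReal.ofReal q) (volume : Measure ℝ)
        ≤ ENNReal.ofReal (B ^ 2 + 4 / Cm)
            * eLpNorm f (ENNReal.ofReal q) (volume : Measure ℝ) :=
  stmt_7_general B Cm Cp hCm v ξ hv hvB hξm hξ
end

section
/- Let B, C⁻ > 0. Let v ∈ L²(ℝ) with ‖v‖_{L²} ≤ B and let ξ : ℝ → ℝ be measurable with ξ(z) ≥ C⁻ for a.e. z. Then for all real numbers z₁ < z₂: ∫_{z₁}^{z₂} cos²(v(z)/2) ξ(z) dz ≥ (C⁻/2)·((z₂ − z₁) − B²/2). -/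
/-!
Off the set `A = {|v| ≥ π/2}` one has `cos²(v/2) = (1 + cos v)/2 ≥ 1/2`, so the integrand is at
least `C⁻/2` there. By Chebyshev's inequality `|A| ≤ ‖v‖₂² / (π/2)² ≤ ‖v‖₂² / 2`, so the part of
the interval outside `A` has measure at least `(z₂ - z₁) - B²/2`.
-/

open MeasureTheory Real

theorem one_half_le_cos_half_sq {x : ℝ} (hx : |x| ≤ π / 2) : 1 / 2 ≤ cos (x / 2) ^ 2 := by
  have hcos : 0 ≤ cos x := cos_nonneg_of_mem_Icc (abs_le.mp hx)
  rw [cos_sq, mul_div_cancel₀ x two_ne_zero]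
  linarith

theorem measure_pi_div_two_le_abs_le_eLpNorm_sq_div_two {α : Type*} [MeasurableSpace α]
    {μ : Measure α} {v : α → ℝ} (hv : AEStronglyMeasurable v μ) :
    μ {x | π / 2 ≤ |v x|} ≤ eLpNorm v 2 μ ^ 2 / 2 := by
  have hcheb := mul_meas_ge_le_pow_eLpNorm' μ two_ne_zero ENNReal.ofNat_ne_top hv
    (ENNReal.ofReal (π / 2))
  have hset : {x | ENNReal.ofReal (π / 2) ≤ ‖v x‖ₑ} = {x | π / 2 ≤ |v x|} := by
    ext x
    simp only [Set.mem_ofPred_eq, ← ofReal_norm, norm_eq_abs]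
    exact ENNReal.ofReal_le_ofReal_iff (abs_nonneg _)
  have htwo : (2 : ENNReal) ≤ ENNReal.ofReal (π / 2) ^ 2 := by
    rw [← ENNReal.ofReal_pow (by positivity), ← ENNReal.ofReal_ofNat]
    apply ENNReal.ofReal_le_ofReal
    nlinarith [pi_gt_three]
  rw [hset, ENNReal.toReal_ofNat, ENNReal.rpow_two, ENNReal.rpow_two] at hcheb
  rw [ENNReal.le_div_iff_mul_le (by norm_num) (by norm_num), mul_comm]
  exact (mul_le_mul_left htwo _).trans hcheb

theorem ofReal_half_mul_sub_le_setLIntegral_cos_half_sq_mul {α : Type*} [MeasurableSpace α]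
    {μ : Measure α} {v ξ : α → ℝ} {c : ℝ} (s : Set α) (hv : AEStronglyMeasurable v μ)
    (hξ : ∀ᵐ x ∂μ, c ≤ ξ x) :
    ENNReal.ofReal (c / 2) * (μ s - eLpNorm v 2 μ ^ 2 / 2)
      ≤ ∫⁻ x in s, ENNReal.ofReal (cos (v x / 2) ^ 2 * ξ x) ∂μ := by
  set A := {x | π / 2 ≤ |v x|}
  have hA : NullMeasurableSet A μ :=
    nullMeasurableSet_le aemeasurable_const hv.aemeasurable.abs
  have hnotMem_A : ∀ᵐ x ∂μ.restrict (s \ A), x ∉ A := by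
    rw [← measure_eq_zero_iff_ae_notMem,
      Measure.restrict_apply₀ (hA.mono_ac Measure.restrict_le_self.absolutelyContinuous)]
    simp
  have hbound : ∀ᵐ x ∂μ.restrict (s \ A),
      ENNReal.ofReal (c / 2) ≤ ENNReal.ofReal (cos (v x / 2) ^ 2 * ξ x) := by
    filter_upwards [hnotMem_A, ae_restrict_of_ae hξ] with x hxA hxξ
    have hcos := one_half_le_cos_half_sq (not_le.mp hxA).le
    refine ENNReal.ofReal_le_ofReal_iff'.mpr ?_
    rcases le_or_gt c 0 with hc | hc
    · exact Or.inr (by linarith)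
    · exact Or.inl (by nlinarith)
  calc ENNReal.ofReal (c / 2) * (μ s - eLpNorm v 2 μ ^ 2 / 2)
      ≤ ENNReal.ofReal (c / 2) * μ (s \ A) := by
        gcongr
        exact (tsub_le_tsub_left (measure_pi_div_two_le_abs_le_eLpNorm_sq_div_two hv) _).trans
          le_measure_sdiff
    _ = ∫⁻ _ in s \ A, ENNReal.ofReal (c / 2) ∂μ := (setLIntegral_const _ _).symm
    _ ≤ ∫⁻ x in s \ A, ENNReal.ofReal (cos (v x / 2) ^ 2 * ξ x) ∂μ := lintegral_mono_ae hbound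
    _ ≤ ∫⁻ x in s, ENNReal.ofReal (cos (v x / 2) ^ 2 * ξ x) ∂μ :=
        lintegral_mono_set Set.sdiff_subset

theorem stmt_9_general (B Cm : ℝ) (hCm : 0 < Cm)
    (v ξ : ℝ → ℝ)
    (hv : MemLp v 2 (volume : Measure ℝ))
    (hvB : eLpNorm v 2 (volume : Measure ℝ) ≤ ENNReal.ofReal B)
    (hξ : ∀ᵐ z : ℝ, Cm ≤ ξ z) :
    ∀ z₁ z₂ : ℝ, z₁ < z₂ →
      ENNReal.ofReal ((Cm / 2) * ((z₂ - z₁) - B ^ 2 / 2))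
        ≤ ∫⁻ z in Set.Ioc z₁ z₂, ENNReal.ofReal (Real.cos (v z / 2) ^ 2 * ξ z) := by
  intro z₁ z₂ _
  have hnorm_sq : eLpNorm v 2 volume ^ 2 ≤ ENNReal.ofReal (B ^ 2) := by
    rw [← sq_abs, ENNReal.ofReal_pow (abs_nonneg B)]
    gcongr
    exact hvB.trans (ENNReal.ofReal_le_ofReal (le_abs_self B))
  calc ENNReal.ofReal ((Cm / 2) * ((z₂ - z₁) - B ^ 2 / 2))
      = ENNReal.ofReal (Cm / 2) * (volume (Set.Ioc z₁ z₂) - ENNReal.ofReal (B ^ 2) / 2) := by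
        rw [ENNReal.ofReal_mul (by positivity), ENNReal.ofReal_sub _ (by positivity),
          Real.volume_Ioc, ENNReal.ofReal_div_of_pos (x := B ^ 2) two_pos, ENNReal.ofReal_ofNat]
    _ ≤ ENNReal.ofReal (Cm / 2) * (volume (Set.Ioc z₁ z₂) - eLpNorm v 2 volume ^ 2 / 2) := by
        gcongr
    _ ≤ _ := ofReal_half_mul_sub_le_setLIntegral_cos_half_sq_mul _ hv.aestronglyMeasurable hξ

/-- If `‖v‖_{L²} ≤ B` and `ξ ≥ C⁻ > 0` a.e., then for all `z₁ < z₂`,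
`∫_{z₁}^{z₂} cos²(v/2) ξ ≥ (C⁻/2)((z₂ − z₁) − B²/2)` (the integral of the
nonnegative integrand is taken as a lower Lebesgue integral). -/
theorem stmt_9 (B Cm : ℝ) (hB : 0 < B) (hCm : 0 < Cm)
    (v ξ : ℝ → ℝ)
    (hv : MemLp v 2 (volume : Measure ℝ))
    (hvB : eLpNorm v 2 (volume : Measure ℝ) ≤ ENNReal.ofReal B)
    (hξm : Measurable ξ) (hξ : ∀ᵐ z : ℝ, Cm ≤ ξ z) :
    ∀ z₁ z₂ : ℝ, z₁ < z₂ →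
      ENNReal.ofReal ((Cm / 2) * ((z₂ - z₁) - B ^ 2 / 2))
        ≤ ∫⁻ z in Set.Ioc z₁ z₂, ENNReal.ofReal (Real.cos (v z / 2) ^ 2 * ξ z) :=
  stmt_9_general B Cm hCm v ξ hv hvB hξ
end

section
/- Let u ∈ H¹(ℝ) be absolutely continuous, and let ξ, v : ℝ → ℝ be measurable with ξ ≥ 0 a.e., such that the a.e. derivative of u satisfies u'(Y) = ξ(Y) sin(v(Y)/2) cos(v(Y)/2) for a.e. Y ∈ ℝ. Then sup_{Y ∈ ℝ} u²(Y) ≤ ∫_ℝ [u²(Y) ξ(Y) cos²(v(Y)/2) + ξ(Y) sin²(v(Y)/2)] dY. -/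
/-!
Since `u` is absolutely continuous, `u(Y)² - u(x)² = 2 ∫_x^Y u u'`. As `u² ∈ L¹`, `u(x)²` is
arbitrarily small for suitable `x → -∞`, so `u(Y)² ≤ 2 ∫ |u u'|`. Pointwise, with `θ = v/2`,
AM-GM gives `2 |u ξ sin θ cos θ| ≤ ξ (u² cos² θ + sin² θ)` because `ξ ≥ 0`.
-/

open MeasureTheory Real Set Filter

theorem MeasureTheory.Integrable.frequently_atBot_lt {f : ℝ → ℝ} (hf : Integrable f) {ε : ℝ}
    (hε : 0 < ε) :
    ∃ᶠ x in atBot, f x < ε := by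
  intro h
  obtain ⟨Y, hY⟩ := eventually_atBot.mp (h.mono fun x hx => not_lt.mp hx)
  have : volume (Iic Y) < ⊤ := (measure_mono hY).trans_lt (hf.measure_ge_lt_top hε)
  simp at this

theorem two_mul_abs_mul_sin_mul_cos_le {ξ : ℝ} (hξ : 0 ≤ ξ) (a θ : ℝ) :
    2 * |a * (ξ * sin θ * cos θ)| ≤ a ^ 2 * ξ * cos θ ^ 2 + ξ * sin θ ^ 2 := by
  have amgm := two_mul_le_add_sq |a * cos θ| |sin θ|
  rw [sq_abs, sq_abs, mul_pow] at amgm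
  calc 2 * |a * (ξ * sin θ * cos θ)| = ξ * (2 * |a * cos θ| * |sin θ|) := by
        rw [abs_mul, abs_mul, abs_mul, abs_mul, abs_of_nonneg hξ]; ring
    _ ≤ ξ * (a ^ 2 * cos θ ^ 2 + sin θ ^ 2) := mul_le_mul_of_nonneg_left amgm hξ
    _ = a ^ 2 * ξ * cos θ ^ 2 + ξ * sin θ ^ 2 := by ring

section IndefiniteIntegral

variable {u u' : ℝ → ℝ} {c C : ℝ}

theorem absolutelyContinuousOnInterval_of_eq_add_integral (hu' : LocallyIntegrable u')
    (hac : ∀ x, u x = C + ∫ t in c..x, u' t) (a b : ℝ) :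
    AbsolutelyContinuousOnInterval u a b := by
  have hint (x y : ℝ) : IntervalIntegrable u' volume x y :=
    (hu'.integrableOn_isCompact isCompact_uIcc).intervalIntegrable
  -- the base point of the indefinite integral has to lie in `[a, b]`
  have hshift : u = fun x => u a + ∫ t in a..x, u' t := by
    funext x
    rw [hac x, hac a, add_assoc,
      intervalIntegral.integral_add_adjacent_intervals (hint c a) (hint a x)]
  rw [hshift]
  exact ((LipschitzWith.const (u a)).lipschitzOnWith.absolutelyContinuousOnInterval).add
    ((hint a b).absolutelyContinuousOnInterval_intervalIntegral (by simp))

theorem ae_hasDerivAt_of_eq_add_integral (hu' : LocallyIntegrable u')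
    (hac : ∀ x, u x = C + ∫ t in c..x, u' t) : ∀ᵐ x, HasDerivAt u (u' x) x := by
  filter_upwards [_root_.LocallyIntegrable.ae_hasDerivAt_integral hu'] with x hx
  rw [show u = fun x => C + ∫ t in c..x, u' t from funext hac]
  exact (hx c).const_add C

theorem sq_sub_sq_eq_two_mul_integral_mul (hu' : LocallyIntegrable u')
    (hac : ∀ x, u x = C + ∫ t in c..x, u' t) (a b : ℝ) :
    u b ^ 2 - u a ^ 2 = 2 * ∫ t in a..b, u t * u' t := by
  have hAC := absolutelyContinuousOnInterval_of_eq_add_integral hu' hac a b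
  have hderiv : ∀ᵐ t, t ∈ uIoc a b →
      deriv u t * u t + u t * deriv u t = 2 * (u t * u' t) := by
    filter_upwards [ae_hasDerivAt_of_eq_add_integral hu' hac] with t ht _
    rw [ht.deriv]; ring
  rw [sq, sq, ← hAC.integral_deriv_mul_eq_sub hAC, intervalIntegral.integral_congr_ae hderiv,
    intervalIntegral.integral_const_mul]

theorem sq_le_two_mul_integral_abs_mul (hu : Integrable fun x => u x ^ 2)
    (huu' : Integrable fun x => u x * u' x) (hu' : LocallyIntegrable u')
    (hac : ∀ x, u x = C + ∫ t in c..x, u' t) (Y : ℝ) :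
    u Y ^ 2 ≤ 2 * ∫ x, |u x * u' x| := by
  refine le_of_forall_pos_le_add fun ε hε => ?_
  obtain ⟨x, hx_small, hxY⟩ :=
    ((hu.frequently_atBot_lt hε).and_eventually (eventually_le_atBot Y)).exists
  have hbound : ∫ t in x..Y, u t * u' t ≤ ∫ t, |u t * u' t| := by
    rw [intervalIntegral.integral_of_le hxY]
    exact (le_abs_self _).trans <| abs_integral_le_integral_abs.trans <|
      setIntegral_le_integral huu'.abs (ae_of_all _ fun _ => abs_nonneg _)
  linarith [sq_sub_sq_eq_two_mul_integral_mul hu' hac x Y]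

end IndefiniteIntegral

theorem stmt_13_general (u u' ξ v : ℝ → ℝ)
    (hu : MemLp u 2 (volume : Measure ℝ)) (hu' : MemLp u' 2 (volume : Measure ℝ))
    (hac : ∀ x : ℝ, u x = u 0 + ∫ z in (0 : ℝ)..x, u' z)
    (hξ0 : ∀ᵐ Y : ℝ, 0 ≤ ξ Y)
    (hder : ∀ᵐ Y : ℝ, u' Y = ξ Y * Real.sin (v Y / 2) * Real.cos (v Y / 2)) :
    ∀ Y : ℝ, ENNReal.ofReal ((u Y) ^ 2)
      ≤ ∫⁻ Y' : ℝ, ENNReal.ofReal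
          ((u Y') ^ 2 * ξ Y' * Real.cos (v Y' / 2) ^ 2
            + ξ Y' * Real.sin (v Y' / 2) ^ 2) := by
  intro Y
  have huu' : Integrable fun x => u x * u' x := hu.integrable_mul hu'
  calc ENNReal.ofReal (u Y ^ 2) ≤ ENNReal.ofReal (2 * ∫ x, |u x * u' x|) :=
        ENNReal.ofReal_le_ofReal <| sq_le_two_mul_integral_abs_mul hu.integrable_sq huu'
          (hu'.locallyIntegrable one_le_two) hac Y
    _ = ∫⁻ x, ENNReal.ofReal (2 * |u x * u' x|) := by
        rw [← integral_const_mul, ofReal_integral_eq_lintegral_ofReal (huu'.abs.const_mul 2)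
          (ae_of_all _ fun _ => by positivity)]
    _ ≤ _ := by
        refine lintegral_mono_ae ?_
        filter_upwards [hξ0, hder] with x hξx hx
        rw [hx]
        exact ENNReal.ofReal_le_ofReal (two_mul_abs_mul_sin_mul_cos_le hξx _ _)

/-- If `u ∈ H¹(ℝ)` is absolutely continuous with a.e. derivative
`u' = ξ sin(v/2) cos(v/2)` and `ξ ≥ 0` a.e., then
`sup_Y u²(Y) ≤ ∫ (u² ξ cos²(v/2) + ξ sin²(v/2))`. -/
theorem stmt_13 (u u' ξ v : ℝ → ℝ)
    (hu : MemLp u 2 (volume : Measure ℝ)) (hu' : MemLp u' 2 (volume : Measure ℝ))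
    (hac : ∀ x : ℝ, u x = u 0 + ∫ z in (0 : ℝ)..x, u' z)
    (hξm : Measurable ξ) (hvm : Measurable v)
    (hξ0 : ∀ᵐ Y : ℝ, 0 ≤ ξ Y)
    (hder : ∀ᵐ Y : ℝ, u' Y = ξ Y * Real.sin (v Y / 2) * Real.cos (v Y / 2)) :
    ∀ Y : ℝ, ENNReal.ofReal ((u Y) ^ 2)
      ≤ ∫⁻ Y' : ℝ, ENNReal.ofReal
          ((u Y') ^ 2 * ξ Y' * Real.cos (v Y' / 2) ^ 2
            + ξ Y' * Real.sin (v Y' / 2) ^ 2) :=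
  stmt_13_general u u' ξ v hu hu' hac hξ0 hder
end

section
/- Let f : ℝ → ℝ be continuous, bounded, and integrable. Define g(x) = (1/2)∫_ℝ e^{−|x−y|} f(y) dy. Then g is twice differentiable on ℝ, with g'(x) = −(1/2)∫_ℝ sign(x−y) e^{−|x−y|} f(y) dy, and g''(x) = g(x) − f(x) for every x ∈ ℝ. -/
open MeasureTheory Real

noncomputable section

/-- `g = p * f` where `p(x) = (1/2) e^{-|x|}`. -/
def convP (f : ℝ → ℝ) (x : ℝ) : ℝ := (1 / 2) * ∫ y : ℝ, Real.exp (-|x - y|) * f y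

/-- The candidate first derivative of `g = p * f`. -/
def convP' (f : ℝ → ℝ) (x : ℝ) : ℝ :=
  -(1 / 2) * ∫ y : ℝ, Real.sign (x - y) * Real.exp (-|x - y|) * f y

/-!
Splitting the kernel at `y = x` gives `g x = (e^{-x} L x + e^x R x) / 2` with the tail
integrals `L x = ∫_{y ≤ x} e^y f y` and `R x = ∫_{y ≥ x} e^{-y} f y`. By the fundamental
theorem of calculus `L' = e^x f` and `R' = -e^{-x} f`, so the product rule gives `g'`, in which
the two `f`-terms cancel, and then `g''`, in which they add up to `-f`.
-/

open Set

lemma Real.monotone_sign : Monotone Real.sign := by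
  intro a b hab
  rcases lt_trichotomy a 0 with ha | rfl | ha
  · rw [Real.sign_of_neg ha]
    rcases Real.sign_apply_eq b with h | h | h <;> rw [h] <;> norm_num
  · rcases lt_trichotomy b 0 with hb | rfl | hb
    · exact absurd hab hb.not_ge
    · rfl
    · rw [Real.sign_zero, Real.sign_of_pos hb]; norm_num
  · rw [Real.sign_of_pos ha, Real.sign_of_pos (ha.trans_le hab)]

lemma Real.abs_sign_le_one (r : ℝ) : |Real.sign r| ≤ 1 := by
  rcases Real.sign_apply_eq r with h | h | h <;> rw [h] <;> norm_num

section TailIntegrals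

open intervalIntegral

variable {E : Type*} [NormedAddCommGroup E] [NormedSpace ℝ E] [CompleteSpace E] {h : ℝ → E}

theorem hasDerivAt_integral_Iic (hcont : Continuous h) (hint : ∀ a, IntegrableOn h (Iic a))
    (x : ℝ) : HasDerivAt (fun a => ∫ y in Iic a, h y) (h x) x := by
  have hsplit :
      (fun a => ∫ y in Iic a, h y) = fun a => (∫ y in Iic 0, h y) + ∫ y in 0..a, h y := by
    funext a
    rw [← integral_Iic_sub_Iic (hint 0) (hint a), add_sub_cancel]
  rw [hsplit]
  exact (integral_hasDerivAt_right (hcont.intervalIntegrable 0 x)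
    (hcont.stronglyMeasurableAtFilter _ _) hcont.continuousAt).const_add _

theorem hasDerivAt_integral_Ici (hcont : Continuous h) (hint : ∀ a, IntegrableOn h (Ici a))
    (x : ℝ) : HasDerivAt (fun a => ∫ y in Ici a, h y) (-h x) x := by
  have hsplit :
      (fun a => ∫ y in Ici a, h y) = fun a => (∫ y in Ici 0, h y) - ∫ y in 0..a, h y := by
    funext a
    rw [← integral_Ici_sub_Ici' (hint 0) (hint a), sub_sub_cancel]
  rw [hsplit]
  exact (integral_hasDerivAt_right (hcont.intervalIntegrable 0 x)
    (hcont.stronglyMeasurableAtFilter _ _) hcont.continuousAt).const_sub _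

end TailIntegrals

section ExpKernel

variable {f : ℝ → ℝ}

lemma MeasureTheory.Integrable.integrableOn_exp_mul_Iic (hf : Integrable f) (a : ℝ) :
    IntegrableOn (fun y => exp y * f y) (Iic a) :=
  hf.integrableOn.bdd_mul (c := exp a) continuous_exp.aestronglyMeasurable <| by
    filter_upwards [ae_restrict_mem measurableSet_Iic] with y hy
    simpa [abs_of_pos (exp_pos y)] using hy

lemma MeasureTheory.Integrable.integrableOn_exp_neg_mul_Ici (hf : Integrable f) (a : ℝ) :
    IntegrableOn (fun y => exp (-y) * f y) (Ici a) :=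
  hf.integrableOn.bdd_mul (c := exp (-a))
    (continuous_exp.comp continuous_neg).aestronglyMeasurable <| by
    filter_upwards [ae_restrict_mem measurableSet_Ici] with y hy
    simpa [abs_of_pos (exp_pos _)] using hy

lemma MeasureTheory.Integrable.exp_neg_abs_sub_mul (hf : Integrable f) (x : ℝ) :
    Integrable (fun y => exp (-|x - y|) * f y) :=
  hf.bdd_mul (c := 1) (by fun_prop) <| by
    filter_upwards with y
    simp [abs_of_pos (exp_pos _)]

lemma MeasureTheory.Integrable.sign_mul_exp_neg_abs_sub_mul (hf : Integrable f) (x : ℝ) :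
    Integrable (fun y => Real.sign (x - y) * exp (-|x - y|) * f y) :=
  hf.bdd_mul (c := 1)
    (((Real.monotone_sign.measurable.comp (measurable_const.sub measurable_id)).mul
      (by fun_prop)).aestronglyMeasurable) <| by
    filter_upwards with y
    rw [norm_mul, Real.norm_eq_abs, Real.norm_eq_abs, abs_of_pos (exp_pos _)]
    exact mul_le_one₀ (Real.abs_sign_le_one _) (exp_pos _).le (by simp)

def leftTail (f : ℝ → ℝ) (x : ℝ) : ℝ := ∫ y in Iic x, exp y * f y

def rightTail (f : ℝ → ℝ) (x : ℝ) : ℝ := ∫ y in Ici x, exp (-y) * f y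

lemma hasDerivAt_leftTail (hc : Continuous f) (hf : Integrable f) (x : ℝ) :
    HasDerivAt (leftTail f) (exp x * f x) x :=
  hasDerivAt_integral_Iic (by fun_prop) hf.integrableOn_exp_mul_Iic x

lemma hasDerivAt_rightTail (hc : Continuous f) (hf : Integrable f) (x : ℝ) :
    HasDerivAt (rightTail f) (-(exp (-x) * f x)) x :=
  hasDerivAt_integral_Ici (by fun_prop) hf.integrableOn_exp_neg_mul_Ici x

lemma convP_eq_tails (hf : Integrable f) (x : ℝ) :
    convP f x = (exp (-x) * leftTail f x + exp x * rightTail f x) / 2 := by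
  have hK := hf.exp_neg_abs_sub_mul x
  have hleft : ∫ y in Iic x, exp (-|x - y|) * f y = exp (-x) * leftTail f x := by
    rw [leftTail, ← integral_const_mul]
    refine setIntegral_congr_fun measurableSet_Iic fun y (hy : y ≤ x) => ?_
    rw [abs_of_nonneg (sub_nonneg.2 hy), ← mul_assoc, ← exp_add, neg_sub, sub_eq_neg_add]
  have hright : ∫ y in Ioi x, exp (-|x - y|) * f y = exp x * rightTail f x := by
    rw [rightTail, integral_Ici_eq_integral_Ioi, ← integral_const_mul]
    refine setIntegral_congr_fun measurableSet_Ioi fun y (hy : x < y) => ?_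
    rw [abs_of_neg (sub_neg.2 hy), ← mul_assoc, ← exp_add, neg_neg, sub_eq_add_neg]
  rw [convP, ← intervalIntegral.integral_Iic_add_Ioi hK.integrableOn hK.integrableOn, hleft,
    hright]
  ring

lemma convP'_eq_tails (hf : Integrable f) (x : ℝ) :
    convP' f x = (exp x * rightTail f x - exp (-x) * leftTail f x) / 2 := by
  have hK := hf.sign_mul_exp_neg_abs_sub_mul x
  have hleft : ∫ y in Iic x, Real.sign (x - y) * exp (-|x - y|) * f y =
      exp (-x) * leftTail f x := by
    rw [leftTail, integral_Iic_eq_integral_Iio, integral_Iic_eq_integral_Iio,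
      ← integral_const_mul]
    refine setIntegral_congr_fun measurableSet_Iio fun y (hy : y < x) => ?_
    rw [Real.sign_of_pos (sub_pos.2 hy), abs_of_pos (sub_pos.2 hy), one_mul, ← mul_assoc,
      ← exp_add, neg_sub, sub_eq_neg_add]
  have hright : ∫ y in Ioi x, Real.sign (x - y) * exp (-|x - y|) * f y =
      -(exp x * rightTail f x) := by
    rw [rightTail, integral_Ici_eq_integral_Ioi, ← integral_const_mul, ← integral_neg]
    refine setIntegral_congr_fun measurableSet_Ioi fun y (hy : x < y) => ?_
    rw [Real.sign_of_neg (sub_neg.2 hy), abs_of_neg (sub_neg.2 hy), neg_one_mul, neg_mul,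
      ← mul_assoc, ← exp_add, neg_neg, sub_eq_add_neg]
  rw [convP', ← intervalIntegral.integral_Iic_add_Ioi hK.integrableOn hK.integrableOn, hleft,
    hright]
  ring

end ExpKernel

theorem stmt_15_general (f : ℝ → ℝ) (hc : Continuous f)
    (hi : Integrable f (volume : Measure ℝ)) :
    (∀ x : ℝ, HasDerivAt (convP f) (convP' f x) x) ∧
    (∀ x : ℝ, HasDerivAt (convP' f) (convP f x - f x) x) := by
  have hexp_neg (x : ℝ) : HasDerivAt (fun u => exp (-u)) (-exp (-x)) x := by
    simpa using (hasDerivAt_neg x).exp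
  have hexp_cancel (x : ℝ) : exp (-x) * exp x = 1 := by rw [← exp_add, neg_add_cancel, exp_zero]
  have hconvP : convP f = fun x => (exp (-x) * leftTail f x + exp x * rightTail f x) / 2 :=
    funext (convP_eq_tails hi)
  have hconvP' : convP' f = fun x => (exp x * rightTail f x - exp (-x) * leftTail f x) / 2 :=
    funext (convP'_eq_tails hi)
  refine ⟨fun x => ?_, fun x => ?_⟩
  · have hg := (((hexp_neg x).fun_mul (hasDerivAt_leftTail hc hi x)).fun_add
      ((Real.hasDerivAt_exp x).fun_mul (hasDerivAt_rightTail hc hi x))).div_const 2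
    rw [hconvP, hconvP']
    exact hg.congr_deriv (by ring)
  · have hg' := (((Real.hasDerivAt_exp x).fun_mul (hasDerivAt_rightTail hc hi x)).fun_sub
      ((hexp_neg x).fun_mul (hasDerivAt_leftTail hc hi x))).div_const 2
    rw [hconvP, hconvP']
    exact hg'.congr_deriv (by linear_combination -f x * hexp_cancel x)

/-- If `f` is continuous, bounded and integrable, then `g = p * f` is twice
differentiable with `g'` given by the sign-kernel formula and `g'' = g − f`;
i.e. `(1 − ∂_x²)(p * f) = f`. -/
theorem stmt_15 (f : ℝ → ℝ) (hc : Continuous f) (hb : ∃ M : ℝ, ∀ x : ℝ, |f x| ≤ M)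
    (hi : Integrable f (volume : Measure ℝ)) :
    (∀ x : ℝ, HasDerivAt (convP f) (convP' f x) x) ∧
    (∀ x : ℝ, HasDerivAt (convP' f) (convP f x - f x) x) :=
  stmt_15_general f hc hi
end
end

section
/- Let w ∈ L¹(ℝ) with w ≥ 0 a.e., and let u ∈ H¹(ℝ) be absolutely continuous with a.e. derivative u' satisfying (u')² = w a.e. Define F : ℝ → ℝ by F(x) = x + ∫_{−∞}^x w(z) dz. Then F is a continuous strictly increasing bijection of ℝ onto ℝ; its inverse β ↦ x(β) is Lipschitz continuous with Lipschitz constant 1; and the map β ↦ u(x(β)) is Lipschitz continuous with Lipschitz constant 1/2. -/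
/-!
Since `w ≥ 0` is integrable, `G x = ∫_{-∞}^x w` is continuous, monotone and bounded, so
`F = id + G` is a continuous strictly increasing bijection with `F b - F a ≥ b - a`; hence its
inverse is `1`-Lipschitz. For `u`, the pointwise bound `|u'| ≤ (1 + u'²) / 2 = (1 + w) / 2`
integrated over `[a, b]` gives `|u b - u a| ≤ (F b - F a) / 2`, which becomes the
`1/2`-Lipschitz bound after substituting `a = x(β₁)`, `b = x(β₂)`.
-/

open MeasureTheory Set Filter Function

theorem Continuous.surjective_id_add {G : ℝ → ℝ} (hG : Continuous G) {C : ℝ}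
    (hGC : ∀ x, |G x| ≤ C) : Surjective fun x => x + G x :=
  (continuous_id.add hG).surjective
    (tendsto_atTop_mono (fun x => show x + -C ≤ x + G x by linarith [neg_abs_le (G x), hGC x])
      (tendsto_atTop_add_const_right _ (-C) tendsto_id))
    (tendsto_atBot_mono (fun x => show x + G x ≤ x + C by linarith [le_abs_self (G x), hGC x])
      (tendsto_atBot_add_const_right _ C tendsto_id))

theorem Monotone.antilipschitzWith_one_id_add {G : ℝ → ℝ} (hG : Monotone G) :
    AntilipschitzWith 1 fun x => x + G x := by
  refine AntilipschitzWith.of_le_mul_dist fun a b => ?_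
  wlog hab : a ≤ b generalizing a b
  · rw [dist_comm, dist_comm (a + G a)]
    exact this b a (le_of_not_ge hab)
  rw [NNReal.coe_one, one_mul, Real.dist_eq, Real.dist_eq, abs_sub_comm,
    abs_of_nonneg (sub_nonneg.2 hab)]
  exact le_abs.2 (Or.inr (by linarith [hG hab]))

section IntegralIio

variable {w : ℝ → ℝ}

theorem continuous_integral_Iio (hw : Integrable w) : Continuous fun x => ∫ z in Iio x, w z :=
  continuous_iff_continuousAt.2 fun x =>
    (hw.integrableOn.continuousOn_Iic_primitive_Iio (a₀ := x + 1)).continuousAt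
      (Iic_mem_nhds (lt_add_one x))

theorem abs_integral_Iio_le (hw : Integrable w) (x : ℝ) :
    |∫ z in Iio x, w z| ≤ ∫ z, ‖w z‖ :=
  (norm_integral_le_integral_norm w).trans
    (setIntegral_le_integral hw.norm (ae_of_all _ fun _ => norm_nonneg _))

theorem monotone_integral_Iio (hw : Integrable w) (hw0 : ∀ᵐ z, 0 ≤ w z) :
    Monotone fun x => ∫ z in Iio x, w z := fun _ _ hab =>
  setIntegral_mono_set hw.integrableOn (ae_restrict_of_ae hw0) (Iio_subset_Iio hab).eventuallyLE

theorem add_integral_Iio_sub (hw : Integrable w) (a b : ℝ) :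
    (b + ∫ z in Iio b, w z) - (a + ∫ z in Iio a, w z) = (b - a) + ∫ z in a..b, w z := by
  rw [← intervalIntegral.integral_Iio_sub_Iio' hw.integrableOn hw.integrableOn]
  ring

end IntegralIio

theorem abs_le_one_add_sq_div_two (t : ℝ) : |t| ≤ (1 + t ^ 2) / 2 := by
  nlinarith [sq_nonneg (|t| - 1), sq_abs t]

theorem abs_sub_le_half_add_integral_sq {u u' w : ℝ → ℝ} (hu' : MemLp u' 2)
    (hac : ∀ x, u x = u 0 + ∫ z in (0 : ℝ)..x, u' z) (hw : Integrable w)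
    (hw' : ∀ᵐ z, u' z ^ 2 = w z) {a b : ℝ} (hab : a ≤ b) :
    |u b - u a| ≤ ((b - a) + ∫ z in a..b, w z) / 2 := by
  have hu'_int : ∀ c d : ℝ, IntervalIntegrable u' volume c d := fun _ _ =>
    ((hu'.locallyIntegrable one_le_two).integrableOn_isCompact isCompact_uIcc).intervalIntegrable
  have hbound : IntervalIntegrable (fun z => (1 + w z) / 2) volume a b :=
    (intervalIntegrable_const.add hw.intervalIntegrable).div_const _
  calc |u b - u a| = |∫ z in a..b, u' z| := by
        rw [hac b, hac a, add_sub_add_left_eq_sub,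
          intervalIntegral.integral_interval_sub_left (hu'_int 0 b) (hu'_int 0 a)]
    _ ≤ ∫ z in a..b, |u' z| := intervalIntegral.abs_integral_le_integral_abs hab
    _ ≤ ∫ z in a..b, (1 + w z) / 2 :=
        intervalIntegral.integral_mono_ae hab (hu'_int a b).abs hbound
          (hw'.mono fun z hz => show |u' z| ≤ (1 + w z) / 2 from hz ▸ abs_le_one_add_sq_div_two (u' z))
    _ = ((b - a) + ∫ z in a..b, w z) / 2 := by
        rw [intervalIntegral.integral_div,
          intervalIntegral.integral_add intervalIntegrable_const hw.intervalIntegrable,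
          intervalIntegral.integral_const, smul_eq_mul, mul_one]

theorem dist_le_half_dist_add_integral_Iio {u u' w : ℝ → ℝ} (hu' : MemLp u' 2)
    (hac : ∀ x, u x = u 0 + ∫ z in (0 : ℝ)..x, u' z) (hw : Integrable w)
    (hw0 : ∀ᵐ z, 0 ≤ w z) (hw' : ∀ᵐ z, u' z ^ 2 = w z) (a b : ℝ) :
    dist (u a) (u b) ≤ 1 / 2 * dist (a + ∫ z in Iio a, w z) (b + ∫ z in Iio b, w z) := by
  wlog hab : a ≤ b generalizing a b
  · rw [dist_comm, dist_comm (a + _)]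
    exact this b a (le_of_not_ge hab)
  have hw_ab : 0 ≤ ∫ z in a..b, w z := intervalIntegral.integral_nonneg_of_ae hab hw0
  rw [Real.dist_eq, Real.dist_eq, abs_sub_comm, abs_sub_comm (a + _), add_integral_Iio_sub hw,
    abs_of_nonneg (add_nonneg (sub_nonneg.2 hab) hw_ab)]
  linarith [abs_sub_le_half_add_integral_sq hu' hac hw hw' hab]

theorem stmt_16_general (w u u' : ℝ → ℝ)
    (hw : Integrable w (volume : Measure ℝ)) (hw0 : ∀ᵐ z : ℝ, 0 ≤ w z)
    (hu' : MemLp u' 2 (volume : Measure ℝ))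
    (hac : ∀ x : ℝ, u x = u 0 + ∫ z in (0 : ℝ)..x, u' z)
    (hw' : ∀ᵐ z : ℝ, (u' z) ^ 2 = w z) :
    Continuous (fun x : ℝ => x + ∫ z in Set.Iio x, w z) ∧
    StrictMono (fun x : ℝ => x + ∫ z in Set.Iio x, w z) ∧
    Function.Bijective (fun x : ℝ => x + ∫ z in Set.Iio x, w z) ∧
    ∃ X : ℝ → ℝ,
      (∀ β : ℝ, X β + ∫ z in Set.Iio (X β), w z = β) ∧
      (∀ x : ℝ, X (x + ∫ z in Set.Iio x, w z) = x) ∧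
      LipschitzWith 1 X ∧
      LipschitzWith (1 / 2) (fun β => u (X β)) := by
  have hG := monotone_integral_Iio hw hw0
  have hF_mono : StrictMono fun x : ℝ => x + ∫ z in Iio x, w z := strictMono_id.add_monotone hG
  have hF_surj : Surjective fun x : ℝ => x + ∫ z in Iio x, w z :=
    (continuous_integral_Iio hw).surjective_id_add (abs_integral_Iio_le hw)
  have hF_bij : Bijective fun x : ℝ => x + ∫ z in Iio x, w z := ⟨hF_mono.injective, hF_surj⟩
  refine ⟨continuous_id.add (continuous_integral_Iio hw), hF_mono, hF_bij, surjInv hF_surj,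
    surjInv_eq hF_surj, leftInverse_surjInv hF_bij,
    hG.antilipschitzWith_one_id_add.to_rightInverse (rightInverse_surjInv hF_surj),
    LipschitzWith.of_dist_le_mul fun a b => ?_⟩
  simpa only [surjInv_eq hF_surj, NNReal.coe_div, NNReal.coe_one, NNReal.coe_ofNat] using
    dist_le_half_dist_add_integral_Iio hu' hac hw hw0 hw' (surjInv hF_surj a) (surjInv hF_surj b)

/-- Let `w ∈ L¹(ℝ)` with `w ≥ 0` a.e., and let `u ∈ H¹(ℝ)` be absolutely
continuous with a.e. derivative `u'` satisfying `(u')² = w` a.e. Then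
`F(x) = x + ∫_{-∞}^x w` is a continuous strictly increasing bijection of `ℝ`,
its inverse `β ↦ x(β)` is `1`-Lipschitz, and `β ↦ u(x(β))` is `1/2`-Lipschitz. -/
theorem stmt_16 (w u u' : ℝ → ℝ)
    (hw : Integrable w (volume : Measure ℝ)) (hw0 : ∀ᵐ z : ℝ, 0 ≤ w z)
    (hu : MemLp u 2 (volume : Measure ℝ)) (hu' : MemLp u' 2 (volume : Measure ℝ))
    (hac : ∀ x : ℝ, u x = u 0 + ∫ z in (0 : ℝ)..x, u' z)
    (hw' : ∀ᵐ z : ℝ, (u' z) ^ 2 = w z) :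
    Continuous (fun x : ℝ => x + ∫ z in Set.Iio x, w z) ∧
    StrictMono (fun x : ℝ => x + ∫ z in Set.Iio x, w z) ∧
    Function.Bijective (fun x : ℝ => x + ∫ z in Set.Iio x, w z) ∧
    ∃ X : ℝ → ℝ,
      (∀ β : ℝ, X β + ∫ z in Set.Iio (X β), w z = β) ∧
      (∀ x : ℝ, X (x + ∫ z in Set.Iio x, w z) = x) ∧
      LipschitzWith 1 X ∧
      LipschitzWith (1 / 2) (fun β => u (X β)) :=
  stmt_16_general w u u' hw hw0 hu' hac hw'
end
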